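/- Let E be a Hausdorff locally convex topological real vector space, let K ⊆ E be a nonempty compact convex set, let x ∈ K, and let U be an open neighborhood of x. Then there exist a natural number n ≥ 1 and extreme points x₁, …, xₙ of K such that the average (x₁ + ⋯ + xₙ)/n lies in U. -/

import Mathlib

/-!
By Krein–Milman, `x` lies in the closure of the convex hull of the extreme points of `K`.
A convex combination `∑ wᵢ zᵢ` is the limit, as `r → ∞`, of the averages in which each `zᵢ`
is repeated `⌊wᵢ r⌋` times, so averages of extreme points are dense in `K`.
-/

open Filter Topology Pointwise

section Floor

variable {ι : Type*} {t : Finset ι} {w : ι → ℝ}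

theorem tendsto_sum_floor_mul_div (hw : ∀ i ∈ t, 0 ≤ w i) :
    Tendsto (fun r : ℝ => ((∑ j ∈ t, ⌊w j * r⌋₊ : ℕ) : ℝ) / r) atTop (𝓝 (∑ j ∈ t, w j)) := by
  simp only [Nat.cast_sum, Finset.sum_div]
  exact tendsto_finsetSum t fun j hj => tendsto_nat_floor_mul_div_atTop (hw j hj)

theorem tendsto_floor_mul_div_sum_floor (hw : ∀ i ∈ t, 0 ≤ w i) (hsum : ∑ i ∈ t, w i ≠ 0)
    {i : ι} (hi : i ∈ t) :
    Tendsto (fun r : ℝ => (⌊w i * r⌋₊ : ℝ) / ((∑ j ∈ t, ⌊w j * r⌋₊ : ℕ) : ℝ)) atTop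
      (𝓝 (w i / ∑ j ∈ t, w j)) := by
  refine ((tendsto_nat_floor_mul_div_atTop (hw i hi)).div (tendsto_sum_floor_mul_div hw)
    hsum).congr' ?_
  filter_upwards [eventually_ne_atTop 0] with r hr
  exact div_div_div_cancel_right₀ hr _ _

end Floor

section Averages

variable {E : Type*}

def averages [AddCommMonoid E] [Module ℝ E] (S : Set E) : Set E :=
  {y | ∃ n : ℕ, 1 ≤ n ∧ ∃ f : Fin n → E, (∀ i, f i ∈ S) ∧ (n : ℝ)⁻¹ • ∑ i, f i = y}

theorem Set.mem_nsmul_iff_exists_fin [AddCommMonoid E] {S : Set E} {n : ℕ} {y : E} :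
    y ∈ n • S ↔ ∃ f : Fin n → E, (∀ i, f i ∈ S) ∧ ∑ i, f i = y := by
  rw [Set.mem_nsmul]
  constructor
  · rintro ⟨f, rfl⟩
    exact ⟨fun i => f i, fun i => (f i).2, List.sum_ofFn.symm⟩
  · rintro ⟨f, hf, rfl⟩
    exact ⟨fun i => ⟨f i, hf i⟩, List.sum_ofFn⟩

theorem Set.sum_nsmul_mem_sum_nsmul [AddCommMonoid E] {ι : Type*} {S : Set E} {t : Finset ι}
    (a : ι → ℕ) {z : ι → E} (hz : ∀ i ∈ t, z i ∈ S) :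
    ∑ i ∈ t, a i • z i ∈ (∑ i ∈ t, a i) • S := by
  rw [← Finset.sum_nsmul_assoc]
  exact Set.finsetSum_mem_finsetSum _ _ _ fun i hi => Set.nsmul_mem_nsmul (hz i hi)

theorem sum_div_smul_mem_averages [AddCommMonoid E] [Module ℝ E] {ι : Type*} {S : Set E}
    {t : Finset ι} (a : ι → ℕ) {z : ι → E} (hz : ∀ i ∈ t, z i ∈ S) (ha : ∑ i ∈ t, a i ≠ 0) :
    ∑ i ∈ t, ((a i : ℝ) / ((∑ j ∈ t, a j : ℕ) : ℝ)) • z i ∈ averages S := by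
  obtain ⟨f, hf, hsum⟩ := Set.mem_nsmul_iff_exists_fin.1 (Set.sum_nsmul_mem_sum_nsmul a hz)
  refine ⟨_, Nat.one_le_iff_ne_zero.2 ha, f, hf, ?_⟩
  rw [hsum, Finset.smul_sum]
  refine Finset.sum_congr rfl fun i _ => ?_
  rw [← Nat.cast_smul_eq_nsmul ℝ, smul_smul, div_eq_inv_mul]

theorem convexHull_subset_closure_averages [AddCommGroup E] [Module ℝ E] [TopologicalSpace E]
    [ContinuousAdd E] [ContinuousSMul ℝ E] (S : Set E) :
    convexHull ℝ S ⊆ closure (averages S) := by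
  rw [convexHull_eq]
  rintro _ ⟨ι, t, w, z, hw, hw1, hz, rfl⟩
  rw [Finset.centerMass_eq_of_sum_1 _ _ hw1]
  have hw1' : ∑ i ∈ t, w i ≠ 0 := hw1 ▸ one_ne_zero
  have hlim : Tendsto (fun r : ℝ => ∑ i ∈ t, ((⌊w i * r⌋₊ : ℝ) /
      ((∑ j ∈ t, ⌊w j * r⌋₊ : ℕ) : ℝ)) • z i) atTop (𝓝 (∑ i ∈ t, w i • z i)) :=
    tendsto_finsetSum t fun i hi => by
      simpa [hw1] using (tendsto_floor_mul_div_sum_floor hw hw1' hi).smul_const (z i)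
  refine mem_closure_of_tendsto hlim ?_
  filter_upwards [(tendsto_sum_floor_mul_div hw).eventually_ne hw1'] with r hr
  exact sum_div_smul_mem_averages (fun i => ⌊w i * r⌋₊) hz fun h => hr (by simp [h])

end Averages

theorem average_of_extremePoints_mem_nhd_general
    {E : Type*} [AddCommGroup E] [Module ℝ E] [TopologicalSpace E]
    [IsTopologicalAddGroup E] [ContinuousSMul ℝ E] [LocallyConvexSpace ℝ E] [T2Space E]
    {K : Set E} (hKcomp : IsCompact K) (hKconv : Convex ℝ K)
    {x : E} (hx : x ∈ K) {U : Set E} (hU : IsOpen U) (hxU : x ∈ U) :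
    ∃ (n : ℕ), 1 ≤ n ∧ ∃ f : Fin n → E,
      (∀ i, f i ∈ K.extremePoints ℝ) ∧ ((n : ℝ)⁻¹ • ∑ i, f i) ∈ U := by
  rw [← closure_convexHull_extremePoints hKcomp hKconv] at hx
  have hx' : x ∈ closure (averages (K.extremePoints ℝ)) :=
    closure_minimal (convexHull_subset_closure_averages _) isClosed_closure hx
  obtain ⟨_, hyU, n, hn, f, hf, rfl⟩ := mem_closure_iff.1 hx' U hU hxU
  exact ⟨n, hn, f, hf, hyU⟩

/-- Krein–Milman consequence: any point of a nonempty compact convex set `K` in a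
Hausdorff locally convex real TVS can be approximated by averages of extreme points:
every open neighborhood of `x ∈ K` contains an average `(x₁ + ⋯ + xₙ)/n` of
extreme points of `K`. -/
theorem average_of_extremePoints_mem_nhd
    {E : Type*} [AddCommGroup E] [Module ℝ E] [TopologicalSpace E]
    [IsTopologicalAddGroup E] [ContinuousSMul ℝ E] [LocallyConvexSpace ℝ E] [T2Space E]
    {K : Set E} (hKne : K.Nonempty) (hKcomp : IsCompact K) (hKconv : Convex ℝ K)
    {x : E} (hx : x ∈ K) {U : Set E} (hU : IsOpen U) (hxU : x ∈ U) :
    ∃ (n : ℕ), 1 ≤ n ∧ ∃ f : Fin n → E,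
      (∀ i, f i ∈ K.extremePoints ℝ) ∧ ((n : ℝ)⁻¹ • ∑ i, f i) ∈ U :=
  average_of_extremePoints_mem_nhd_general hKcomp hKconv hx hU hxU
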